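/- arXiv:1909.07975 — 3 statements merged into one kernel-verified Lean document; each statement's English description precedes it below -/
import Mathlib

section
/- A positive integer x ≥ 4 is a twin prime generator (i.e., both 6x−1 and 6x+1 are prime) if and only if there is no prime p with 5 ≤ p < 6x−1 such that x ≡ κ(p) (mod p) or x ≡ −κ(p) (mod p). -/
def kappa (p : ℕ) : ℕ := if p % 6 = 5 then (p + 1) / 6 else (p - 1) / 6

lemma kappa_key (p x : ℕ) (hp : p.Prime) (h5 : 5 ≤ p) (hx : 1 ≤ x) :
    ((x : ℤ) ≡ (kappa p : ℤ) [ZMOD p] ∨ (x : ℤ) ≡ -(kappa p : ℤ) [ZMOD p]) ↔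
      (p ∣ 6 * x - 1 ∨ p ∣ 6 * x + 1) := by
  have hpZ : Prime (p : ℤ) := Nat.prime_iff_prime_int.mp hp
  have h2 : ¬ (2 : ℕ) ∣ p := fun h => by
    rcases (Nat.prime_dvd_prime_iff_eq Nat.prime_two hp).mp h with rfl; omega
  have h3 : ¬ (3 : ℕ) ∣ p := fun h => by
    rcases (Nat.prime_dvd_prime_iff_eq Nat.prime_three hp).mp h with rfl; omega
  have hmod : p % 6 = 1 ∨ p % 6 = 5 := by omega
  have h6 : ¬ (p : ℤ) ∣ 6 := by
    intro h
    have h' : p ∣ 6 := by exact_mod_cast h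
    have := Nat.le_of_dvd (by norm_num) h'
    interval_cases p
    · omega
    · exact absurd hp (by norm_num)
  have cancel : ∀ a : ℤ, (p : ℤ) ∣ 6 * a ↔ (p : ℤ) ∣ a := by
    intro a
    constructor
    · intro h; exact (hpZ.dvd_mul.mp h).resolve_left h6
    · intro h; exact Dvd.dvd.mul_left h 6
  have e1 : ((x : ℤ) ≡ (kappa p : ℤ) [ZMOD p]) ↔ (p : ℤ) ∣ 6 * x - 6 * (kappa p) := by
    rw [Int.modEq_iff_dvd, dvd_sub_comm, ← cancel (x - (kappa p : ℤ))]
    constructor <;> intro h <;> · convert h using 1; ring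
  have e2 : ((x : ℤ) ≡ -(kappa p : ℤ) [ZMOD p]) ↔ (p : ℤ) ∣ 6 * x + 6 * (kappa p) := by
    rw [Int.modEq_iff_dvd, dvd_sub_comm, sub_neg_eq_add, ← cancel (x + (kappa p : ℤ))]
    constructor <;> intro h <;> · convert h using 1; ring
  have hcast1 : ((6 * x - 1 : ℕ) : ℤ) = 6 * (x : ℤ) - 1 := by
    push_cast [Nat.cast_sub (show 1 ≤ 6 * x by omega)]
    ring
  have hc1 : (p ∣ 6 * x - 1) ↔ (p : ℤ) ∣ 6 * (x : ℤ) - 1 := by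
    rw [← Int.natCast_dvd_natCast, hcast1]
  have hc2 : (p ∣ 6 * x + 1) ↔ (p : ℤ) ∣ 6 * (x : ℤ) + 1 := by
    rw [← Int.natCast_dvd_natCast]; push_cast; rfl
  rcases hmod with hm | hm
  · have hk : (6 * kappa p : ℤ) = (p : ℤ) - 1 := by
      have hkk : kappa p = (p - 1) / 6 := by simp [kappa, hm]
      rw [hkk]
      have hdvd : 6 ∣ p - 1 := by omega
      have h' : 6 * ((p - 1) / 6) = p - 1 := Nat.mul_div_cancel' hdvd
      have h'' : ((6 * ((p - 1) / 6) : ℕ) : ℤ) = ((p - 1 : ℕ) : ℤ) := by rw [h']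
      push_cast [Nat.cast_sub (show 1 ≤ p by omega)] at h''
      push_cast
      omega
    have d1 : (p : ℤ) ∣ 6 * x - 6 * (kappa p) ↔ (p : ℤ) ∣ 6 * x + 1 := by
      rw [hk]
      constructor <;> intro h
      · have := dvd_add h (dvd_refl (p : ℤ)); convert this using 1; rfl; ring
      · have := dvd_sub h (dvd_refl (p : ℤ)); convert this using 1; rfl; ring
    have d2 : (p : ℤ) ∣ 6 * x + 6 * (kappa p) ↔ (p : ℤ) ∣ 6 * x - 1 := by
      rw [hk]
      constructor <;> intro h
      · have := dvd_sub h (dvd_refl (p : ℤ)); convert this using 1; rfl; ring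
      · have := dvd_add h (dvd_refl (p : ℤ)); convert this using 1; rfl; ring
    rw [e1, e2, d1, d2, hc1, hc2]
    tauto
  · have hk : (6 * kappa p : ℤ) = (p : ℤ) + 1 := by
      have hkk : kappa p = (p + 1) / 6 := by simp [kappa, hm]
      rw [hkk]
      have hdvd : 6 ∣ p + 1 := by omega
      have h' : 6 * ((p + 1) / 6) = p + 1 := Nat.mul_div_cancel' hdvd
      have h'' : ((6 * ((p + 1) / 6) : ℕ) : ℤ) = ((p + 1 : ℕ) : ℤ) := by rw [h']
      push_cast at h''
      push_cast
      omega
    have d1 : (p : ℤ) ∣ 6 * x - 6 * (kappa p) ↔ (p : ℤ) ∣ 6 * x - 1 := by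
      rw [hk]
      constructor <;> intro h
      · have := dvd_add h (dvd_refl (p : ℤ)); convert this using 1; rfl; ring
      · have := dvd_sub h (dvd_refl (p : ℤ)); convert this using 1; rfl; ring
    have d2 : (p : ℤ) ∣ 6 * x + 6 * (kappa p) ↔ (p : ℤ) ∣ 6 * x + 1 := by
      rw [hk]
      constructor <;> intro h
      · have := dvd_sub h (dvd_refl (p : ℤ)); convert this using 1; rfl; ring
      · have := dvd_add h (dvd_refl (p : ℤ)); convert this using 1; rfl; ring
    rw [e1, e2, d1, d2, hc1, hc2]

theorem twin_prime_generator_iff (x : ℕ) (hx : 4 ≤ x) :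
    (Nat.Prime (6 * x - 1) ∧ Nat.Prime (6 * x + 1)) ↔
      ¬ ∃ p : ℕ, p.Prime ∧ 5 ≤ p ∧ p < 6 * x - 1 ∧
        ((x : ℤ) ≡ (kappa p : ℤ) [ZMOD p] ∨ (x : ℤ) ≡ -(kappa p : ℤ) [ZMOD p]) := by
  have hx1 : 1 ≤ x := by omega
  constructor
  · rintro ⟨h1, h2⟩ ⟨p, hp, hp5, hplt, hmod⟩
    rcases (kappa_key p x hp hp5 hx1).mp hmod with hd | hd
    · have := (Nat.prime_dvd_prime_iff_eq hp h1).mp hd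
      omega
    · have := (Nat.prime_dvd_prime_iff_eq hp h2).mp hd
      omega
  · intro h
    constructor
    · by_contra hnp
      apply h
      have hp := Nat.minFac_prime (show 6 * x - 1 ≠ 1 by omega)
      have hdvd := Nat.minFac_dvd (6 * x - 1)
      have hne2 : (6 * x - 1).minFac ≠ 2 := by
        intro he; rw [he] at hdvd; omega
      have hne3 : (6 * x - 1).minFac ≠ 3 := by
        intro he; rw [he] at hdvd; omega
      have hp5 : 5 ≤ (6 * x - 1).minFac := by
        have h2 := hp.two_le
        have h4 : (6 * x - 1).minFac ≠ 4 := by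
          intro he; rw [he] at hp; norm_num at hp
        omega
      have hplt : (6 * x - 1).minFac < 6 * x - 1 := by
        rcases lt_or_eq_of_le (Nat.minFac_le (show 0 < 6 * x - 1 by omega)) with h' | h'
        · exact h'
        · exact absurd (h' ▸ hp) hnp
      exact ⟨_, hp, hp5, hplt, (kappa_key _ x hp hp5 hx1).mpr (Or.inl hdvd)⟩
    · by_contra hnp
      apply h
      have hp := Nat.minFac_prime (show 6 * x + 1 ≠ 1 by omega)
      have hdvd := Nat.minFac_dvd (6 * x + 1)
      have hne2 : (6 * x + 1).minFac ≠ 2 := by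
        intro he; rw [he] at hdvd; omega
      have hne3 : (6 * x + 1).minFac ≠ 3 := by
        intro he; rw [he] at hdvd; omega
      have hp5 : 5 ≤ (6 * x + 1).minFac := by
        have h2 := hp.two_le
        have h4 : (6 * x + 1).minFac ≠ 4 := by
          intro he; rw [he] at hp; norm_num at hp
        omega
      have hsq : (6 * x + 1).minFac ^ 2 ≤ 6 * x + 1 :=
        Nat.minFac_sq_le_self (by omega) hnp
      have hplt : (6 * x + 1).minFac < 6 * x - 1 := by
        have h5p : 5 * (6 * x + 1).minFac ≤ (6 * x + 1).minFac ^ 2 := by nlinarith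
        omega
      exact ⟨_, hp, hp5, hplt, (kappa_key _ x hp hp5 hx1).mpr (Or.inr hdvd)⟩
end

section
/- A positive integer x ≥ 4 is a twin prime generator if and only if there is no prime p with 5 ≤ p ≤ √(6x+1) such that x ≡ κ(p) (mod p) or x ≡ −κ(p) (mod p). -/
lemma key_cong (p x : ℕ) (hp : p.Prime) (h5 : 5 ≤ p) :
    ((x : ℤ) ≡ (kappa p : ℤ) [ZMOD p] ∨ (x : ℤ) ≡ -(kappa p : ℤ) [ZMOD p]) ↔
      ((p : ℤ) ∣ 6 * x - 1 ∨ (p : ℤ) ∣ 6 * x + 1) := by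
  have h2 : ¬ (2 ∣ p) := by
    intro h; rcases hp.eq_one_or_self_of_dvd 2 h with h' | h' <;> omega
  have h3 : ¬ (3 ∣ p) := by
    intro h; rcases hp.eq_one_or_self_of_dvd 3 h with h' | h' <;> omega
  have hmod6 : p % 6 = 1 ∨ p % 6 = 5 := by omega
  have hp0 : (0 : ℤ) < (p : ℤ) := by exact_mod_cast (by omega : 0 < p)
  have hcop : Int.gcd (p : ℤ) 6 = 1 := by
    have hnd : ¬ p ∣ 6 := by
      intro h; have := Nat.le_of_dvd (by norm_num) h; interval_cases p <;> omega
    have : Nat.Coprime p 6 := (Nat.Prime.coprime_iff_not_dvd hp).mpr hnd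
    rw [show (6 : ℤ) = ((6 : ℕ) : ℤ) by norm_num, Int.gcd_natCast_natCast]; exact this
  have step : ∀ a b : ℤ, (a ≡ b [ZMOD (p : ℤ)]) ↔ (6 * a ≡ 6 * b [ZMOD (p : ℤ)]) := by
    intro a b
    constructor
    · exact fun h => h.mul_left 6
    · intro h
      have := Int.ModEq.cancel_left_div_gcd hp0 h
      rwa [hcop, Nat.cast_one, Int.ediv_one] at this
  have hdvd : ∀ c : ℤ, ((6 * (x : ℤ)) ≡ c [ZMOD (p : ℤ)]) ↔ (p : ℤ) ∣ 6 * x - c := by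
    intro c
    rw [Int.modEq_iff_dvd, show c - 6 * (x : ℤ) = -(6 * x - c) by ring, dvd_neg]
  -- value of 6 * kappa p
  have hk : (6 * (kappa p : ℤ)) = p + 1 ∨ (6 * (kappa p : ℤ)) = p - 1 := by
    unfold kappa
    rcases hmod6 with h | h
    · right
      rw [if_neg (by omega)]
      have hn : 6 * ((p - 1) / 6) = p - 1 := by omega
      have hc : (6 : ℤ) * (((p - 1) / 6 : ℕ) : ℤ) = ((6 * ((p - 1) / 6) : ℕ) : ℤ) := by
        push_cast
        ring
      rw [hc, hn]
      omega
    · left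
      rw [if_pos h]
      have hn : 6 * ((p + 1) / 6) = p + 1 := by omega
      have hc : (6 : ℤ) * (((p + 1) / 6 : ℕ) : ℤ) = ((6 * ((p + 1) / 6) : ℕ) : ℤ) := by
        push_cast
        ring
      rw [hc, hn]
      omega
  have main : ∀ ε : ℤ, (6 * (kappa p : ℤ)) ≡ ε [ZMOD (p : ℤ)] →
      (((x : ℤ) ≡ (kappa p : ℤ) [ZMOD p] ∨ (x : ℤ) ≡ -(kappa p : ℤ) [ZMOD p]) ↔
        ((p : ℤ) ∣ 6 * x - ε ∨ (p : ℤ) ∣ 6 * x + ε)) := by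
    intro ε hε
    have A : ((x : ℤ) ≡ (kappa p : ℤ) [ZMOD p]) ↔ (p : ℤ) ∣ 6 * x - ε := by
      rw [step]
      constructor
      · intro h; exact (hdvd ε).mp (h.trans hε)
      · intro h; exact ((hdvd ε).mpr h).trans hε.symm
    have B : ((x : ℤ) ≡ -(kappa p : ℤ) [ZMOD p]) ↔ (p : ℤ) ∣ 6 * x + ε := by
      have hε' : (6 * (-(kappa p : ℤ))) ≡ -ε [ZMOD (p : ℤ)] := by
        have := hε.neg
        simpa [mul_neg] using this
      rw [step]
      constructor
      · intro h
        have := (hdvd (-ε)).mp (h.trans hε')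
        simpa [sub_neg_eq_add] using this
      · intro h
        have h' : (p : ℤ) ∣ 6 * x - (-ε) := by simpa [sub_neg_eq_add] using h
        exact ((hdvd (-ε)).mpr h').trans hε'.symm
    rw [A, B]
  rcases hk with hk' | hk'
  · have hε : (6 * (kappa p : ℤ)) ≡ 1 [ZMOD (p : ℤ)] := by
      rw [hk']
      exact Int.modEq_iff_dvd.mpr ⟨-1, by ring⟩
    rw [main 1 hε]
  · have hε : (6 * (kappa p : ℤ)) ≡ -1 [ZMOD (p : ℤ)] := by
      rw [hk']
      exact Int.modEq_iff_dvd.mpr ⟨-1, by ring⟩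
    rw [main (-1) hε]
    constructor
    · rintro (h | h)
      · right; rwa [show 6 * (x : ℤ) - (-1) = 6 * x + 1 by ring] at h
      · left; rwa [show 6 * (x : ℤ) + (-1) = 6 * x - 1 by ring] at h
    · rintro (h | h)
      · right; rwa [show 6 * (x : ℤ) + (-1) = 6 * x - 1 by ring]
      · left; rwa [show 6 * (x : ℤ) - (-1) = 6 * x + 1 by ring]

theorem twin_prime_generator_iff_sqrt (x : ℕ) (hx : 4 ≤ x) :
    (Nat.Prime (6 * x - 1) ∧ Nat.Prime (6 * x + 1)) ↔
      ¬ ∃ p : ℕ, p.Prime ∧ 5 ≤ p ∧ (p : ℝ) ≤ Real.sqrt (6 * x + 1) ∧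
        ((x : ℤ) ≡ (kappa p : ℤ) [ZMOD p] ∨ (x : ℤ) ≡ -(kappa p : ℤ) [ZMOD p]) := by
  have hcast : ((6 * x - 1 : ℕ) : ℤ) = 6 * (x : ℤ) - 1 := by
    have : 1 ≤ 6 * x := by omega
    push_cast [this]
    ring
  constructor
  · rintro ⟨hm, hp1⟩ ⟨p, hp, h5, hsqrt, hcong⟩
    have hsq : p ^ 2 ≤ 6 * x + 1 := by
      have h0 : (0 : ℝ) ≤ (p : ℝ) := by positivity
      have h0' : (0 : ℝ) ≤ (6 * x + 1 : ℝ) := by positivity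
      have := (Real.le_sqrt h0 h0').mp (by exact_mod_cast hsqrt)
      exact_mod_cast this
    rcases (key_cong p x hp h5).mp hcong with hd | hd
    · have hdn : p ∣ 6 * x - 1 := by
        have : (p : ℤ) ∣ ((6 * x - 1 : ℕ) : ℤ) := by rw [hcast]; exact hd
        exact_mod_cast this
      rcases hm.eq_one_or_self_of_dvd p hdn with h' | h'
      · omega
      · nlinarith [hsq, h'.symm]
    · have hdn : p ∣ 6 * x + 1 := by
        have : (p : ℤ) ∣ ((6 * x + 1 : ℕ) : ℤ) := by push_cast; exact hd
        exact_mod_cast this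
      rcases hp1.eq_one_or_self_of_dvd p hdn with h' | h'
      · omega
      · nlinarith [hsq, h'.symm]
  · intro h
    by_contra hnot
    apply h
    have hcases : ¬ Nat.Prime (6 * x - 1) ∨ ¬ Nat.Prime (6 * x + 1) := by tauto
    -- helper to produce the witness from a nonprime n ∈ {6x-1, 6x+1}
    rcases hcases with hnp | hnp
    · set n := 6 * x - 1 with hn
      have hn2 : 2 ≤ n := by omega
      set p := n.minFac with hpdef
      have hpp : p.Prime := Nat.minFac_prime (by omega)
      have hpd : p ∣ n := Nat.minFac_dvd n
      have hsq : p ^ 2 ≤ n := Nat.minFac_sq_le_self (by omega) hnp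
      have h5 : 5 ≤ p := by
        have h2 := hpp.two_le
        have hne2 : p ≠ 2 := by
          intro h; rw [h] at hpd; omega
        have hne3 : p ≠ 3 := by
          intro h; rw [h] at hpd; omega
        have hne4 : p ≠ 4 := by
          intro h; rw [h] at hpp; exact (by decide : ¬ Nat.Prime 4) hpp
        omega
      refine ⟨p, hpp, h5, ?_, ?_⟩
      · have hsq' : (p : ℝ) ^ 2 ≤ (6 * x + 1 : ℝ) := by
          have : p ^ 2 ≤ 6 * x + 1 := by omega
          exact_mod_cast this
        exact (Real.le_sqrt (by positivity) (by positivity)).mpr hsq'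
      · apply (key_cong p x hpp h5).mpr
        left
        have : (p : ℤ) ∣ ((n : ℕ) : ℤ) := Int.natCast_dvd_natCast.mpr hpd
        rwa [hn, hcast] at this
    · set n := 6 * x + 1 with hn
      have hn2 : 2 ≤ n := by omega
      set p := n.minFac with hpdef
      have hpp : p.Prime := Nat.minFac_prime (by omega)
      have hpd : p ∣ n := Nat.minFac_dvd n
      have hsq : p ^ 2 ≤ n := Nat.minFac_sq_le_self (by omega) hnp
      have h5 : 5 ≤ p := by
        have h2 := hpp.two_le
        have hne2 : p ≠ 2 := by
          intro h; rw [h] at hpd; omega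
        have hne3 : p ≠ 3 := by
          intro h; rw [h] at hpd; omega
        have hne4 : p ≠ 4 := by
          intro h; rw [h] at hpp; exact (by decide : ¬ Nat.Prime 4) hpp
        omega
      refine ⟨p, hpp, h5, ?_, ?_⟩
      · have hsq' : (p : ℝ) ^ 2 ≤ (6 * x + 1 : ℝ) := by
          have : p ^ 2 ≤ 6 * x + 1 := by omega
          exact_mod_cast this
        exact (Real.le_sqrt (by positivity) (by positivity)).mpr hsq'
      · apply (key_cong p x hpp h5).mpr
        right
        have : (p : ℤ) ∣ ((n : ℕ) : ℤ) := Int.natCast_dvd_natCast.mpr hpd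
        rw [hn] at this
        push_cast at this
        exact this
end

section
/- For primes p_m < p_n (both ≥ 5), the congruence (p_n² − 1)/6 ≡ (p_m² − 1)/6 (mod ∏_{5 ≤ p ≤ p_m, p prime} p) fails; equivalently, there is no positive integer a with p_m² + a·(product of all primes ≤ p_m) = p_n². -/
/-!
The prime `pm` divides both moduli, so either relation would force `pn ^ 2 ≡ pm ^ 2 ≡ 0`
modulo `pm`, i.e. `pm ∣ pn ^ 2`, which is impossible for distinct primes. For the congruence of
the origins this uses `6 * ((p ^ 2 - 1) / 6) = p ^ 2 - 1`, valid since a prime `p ≥ 5` is prime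
to `6`.
-/

lemma six_mul_sq_sub_one_div_six {n : ℕ} (h2 : ¬ 2 ∣ n) (h3 : ¬ 3 ∣ n) :
    6 * (((n ^ 2 - 1) / 6 : ℕ) : ℤ) = (n : ℤ) ^ 2 - 1 := by
  have hsq : n ^ 2 % 6 = 1 := by
    have : n % 6 = 1 ∨ n % 6 = 5 := by omega
    rcases this with h | h <;> simp [Nat.pow_mod, h]
  have h6 : 6 * ((n ^ 2 - 1) / 6) = n ^ 2 - 1 := by omega
  have h1 : 1 ≤ n ^ 2 := by omega
  rw [← Nat.cast_ofNat, ← Nat.cast_mul, h6, Nat.cast_sub h1]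
  push_cast
  ring

lemma Nat.Prime.six_mul_sq_sub_one_div_six {p : ℕ} (hp : p.Prime) (h5 : 5 ≤ p) :
    6 * (((p ^ 2 - 1) / 6 : ℕ) : ℤ) = (p : ℤ) ^ 2 - 1 := by
  have hndvd (d : ℕ) (hd : 1 < d) (hd5 : d < 5) : ¬ d ∣ p := fun h => by
    rcases hp.eq_one_or_self_of_dvd d h with h | h <;> omega
  exact _root_.six_mul_sq_sub_one_div_six (hndvd 2 (by norm_num) (by norm_num))
    (hndvd 3 (by norm_num) (by norm_num))

lemma Nat.Prime.not_dvd_sq_of_ne {p q : ℕ} (hp : p.Prime) (hq : q.Prime) (hne : p ≠ q) :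
    ¬ p ∣ q ^ 2 := fun h =>
  hne ((Nat.prime_dvd_prime_iff_eq hp hq).1 (hp.dvd_of_dvd_pow h))

lemma Nat.Prime.dvd_prod_filter_prime {p : ℕ} (hp : p.Prime) {s : Finset ℕ} (hs : p ∈ s) :
    p ∣ ∏ q ∈ s.filter Nat.Prime, q :=
  Finset.dvd_prod_of_mem _ (Finset.mem_filter.2 ⟨hs, hp⟩)

theorem origins_incongruent (pm pn : ℕ) (hpm : pm.Prime) (hpn : pn.Prime)
    (h5 : 5 ≤ pm) (hlt : pm < pn) :
    ¬ ((((pn ^ 2 - 1) / 6 : ℕ) : ℤ) ≡ (((pm ^ 2 - 1) / 6 : ℕ) : ℤ)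
        [ZMOD (∏ q ∈ (Finset.Icc 5 pm).filter Nat.Prime, q)]) ∧
    ¬ ∃ a : ℕ, 0 < a ∧ pm ^ 2 + a * (∏ q ∈ (Finset.Iic pm).filter Nat.Prime, q) = pn ^ 2 := by
  have hndvd : ¬ pm ∣ pn ^ 2 := hpm.not_dvd_sq_of_ne hpn hlt.ne
  refine ⟨fun h => hndvd ?_, fun ⟨a, _, ha⟩ => hndvd ?_⟩
  · have hdvd : (pm : ℤ) ∣ ∏ q ∈ (Finset.Icc 5 pm).filter Nat.Prime, (q : ℤ) := by
      rw [← Nat.cast_prod]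
      exact Int.natCast_dvd_natCast.2 (hpm.dvd_prod_filter_prime (Finset.mem_Icc.2 ⟨h5, le_rfl⟩))
    have hsq : (pn : ℤ) ^ 2 - 1 ≡ (pm : ℤ) ^ 2 - 1 [ZMOD pm] := by
      rw [← hpn.six_mul_sq_sub_one_div_six (h5.trans hlt.le), ← hpm.six_mul_sq_sub_one_div_six h5]
      exact (h.of_dvd hdvd).mul_left 6
    have hpn2 : (pn : ℤ) ^ 2 ≡ 0 [ZMOD pm] :=
      calc (pn : ℤ) ^ 2 = ((pn : ℤ) ^ 2 - 1) + 1 := by ring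
        _ ≡ ((pm : ℤ) ^ 2 - 1) + 1 [ZMOD pm] := hsq.add_right 1
        _ = (pm : ℤ) ^ 2 := by ring
        _ ≡ 0 [ZMOD pm] := Int.modEq_zero_iff_dvd.2 (dvd_pow_self _ two_ne_zero)
    exact_mod_cast Int.modEq_zero_iff_dvd.1 hpn2
  · rw [← ha]
    exact dvd_add (dvd_pow_self _ two_ne_zero)
      ((hpm.dvd_prod_filter_prime (Finset.mem_Iic.2 le_rfl)).mul_left a)
end
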